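/- Let g : U' → U be a universal homeomorphism of normal integral varieties over a perfect field k of characteristic p > 0. Then for s sufficiently large there exists a universal homeomorphism h : U → U'^{(σ)} (where σ is the s-th power of Frobenius on k) such that g^{(σ)} ∘ h equals the s-th relative Frobenius F^s_{U/k} : U → U^{(σ)}. -/

import Mathlib

/-! Since `A'` is generated by finitely many elements, each having some `p`-power
in the image of `g`, a single `q = p ^ s` works for all generators. The elements whose `q`-th
power lies in the image form a subalgebra (the `q`-th power map is a ring endomorphism in
characteristic `p`), so `x ↦ x ^ q` lands in the image of `g` on all of `A'`; composing it with
the inverse of `g` onto its image gives `ψ`. -/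

open Function

theorem pow_pow_mem_of_le {M S : Type*} [Monoid M] [SetLike S M] [SubmonoidClass S M] {T : S}
    {x : M} {p m n : ℕ} (hx : x ^ p ^ m ∈ T) (hmn : m ≤ n) : x ^ p ^ n ∈ T := by
  rw [← Nat.add_sub_cancel' hmn, pow_add, pow_mul]
  exact pow_mem hx _

section FrobeniusComap

variable {R B : Type*} [CommSemiring R] [CommSemiring B] [Algebra R B] (p : ℕ) [ExpChar B p]

def Subalgebra.iterateFrobeniusComap (S : Subalgebra R B) (s : ℕ) : Subalgebra R B where
  toSubsemiring := S.toSubsemiring.comap (iterateFrobenius B p s)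
  algebraMap_mem' r := by simp [iterateFrobenius_def, ← map_pow]

theorem Subalgebra.mem_iterateFrobeniusComap (S : Subalgebra R B) {s : ℕ} {x : B} :
    x ∈ S.iterateFrobeniusComap p s ↔ x ^ p ^ s ∈ S :=
  Iff.rfl

variable {p}

theorem Subalgebra.exists_forall_pow_pow_mem [Algebra.FiniteType R B] (S : Subalgebra R B)
    (h : ∀ x : B, ∃ n, x ^ p ^ n ∈ S) : ∃ s, ∀ x : B, x ^ p ^ s ∈ S := by
  obtain ⟨T, hT⟩ := Algebra.FiniteType.out (R := R) (A := B)
  choose n hn using h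
  refine ⟨T.sup n, fun x => ?_⟩
  have hTle : Algebra.adjoin R (T : Set B) ≤ S.iterateFrobeniusComap p (T.sup n) :=
    Algebra.adjoin_le fun y hy =>
      (S.mem_iterateFrobeniusComap p).2 (pow_pow_mem_of_le (hn y) (Finset.le_sup hy))
  exact hTle (hT ▸ Algebra.mem_top)

end FrobeniusComap

theorem RingHom.exists_comp_eq_iterateFrobenius {A B : Type*} [CommRing A] [CommRing B]
    {p : ℕ} [ExpChar B p] {s : ℕ} (f : A →+* B) (hf : Injective f)
    (h : ∀ x : B, x ^ p ^ s ∈ f.range) :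
    ∃ ψ : B →+* A, (∀ a : A, ψ (f a) = a ^ p ^ s) ∧ (∀ x : B, f (ψ x) = x ^ p ^ s) := by
  let e : A ≃+* f.range := RingEquiv.ofLeftInverse (leftInverse_invFun hf)
  let ψ : B →+* A := e.symm.toRingHom.comp ((iterateFrobenius B p s).codRestrict f.range h)
  have hfψ (x : B) : f (ψ x) = x ^ p ^ s :=
    congrArg Subtype.val (e.apply_symm_apply ⟨x ^ p ^ s, h x⟩)
  exact ⟨ψ, fun a => hf (by rw [hfψ, map_pow]), hfψ⟩

theorem frobenius_factors_through_universal_homeomorphism_general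
    (p : ℕ) [Fact p.Prime]
    (k : Type*) [Field k]
    (A A' : Type*) [CommRing A] [CommRing A']
    [Algebra k A] [Algebra k A'] [Algebra.FiniteType k A']
    [CharP A' p]
    (g : A →ₐ[k] A')                                       -- comorphism of g : U' → U
    (hinj : Function.Injective g)                           -- g is dominant (surjective)
    (hrad : ∀ x : A', ∃ n : ℕ, x ^ p ^ n ∈ g.range) :       -- g is radicial
    ∃ s : ℕ, ∃ ψ : A' →+* A,
      (∀ a : A, ψ (g a) = a ^ p ^ s) ∧ (∀ x : A', g (ψ x) = x ^ p ^ s) := by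
  obtain ⟨s, hs⟩ := g.range.exists_forall_pow_pow_mem hrad
  exact ⟨s, (g : A →+* A').exists_comp_eq_iterateFrobenius hinj hs⟩

theorem frobenius_factors_through_universal_homeomorphism
    (p : ℕ) [Fact p.Prime]
    (k : Type*) [Field k] [CharP k p] [PerfectRing k p]
    (A A' : Type*) [CommRing A] [CommRing A'] [IsDomain A] [IsDomain A']
    [Algebra k A] [Algebra k A'] [Algebra.FiniteType k A] [Algebra.FiniteType k A']
    [CharP A p] [CharP A' p]
    [IsIntegrallyClosed A] [IsIntegrallyClosed A']          -- U and U' are normal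
    (g : A →ₐ[k] A')                                       -- comorphism of g : U' → U
    (hfin : g.toRingHom.Finite)                             -- g is finite
    (hinj : Function.Injective g)                           -- g is dominant (surjective)
    (hrad : ∀ x : A', ∃ n : ℕ, x ^ p ^ n ∈ g.range) :       -- g is radicial
    ∃ s : ℕ, ∃ ψ : A' →+* A,
      (∀ a : A, ψ (g a) = a ^ p ^ s) ∧ (∀ x : A', g (ψ x) = x ^ p ^ s) :=
  frobenius_factors_through_universal_homeomorphism_general p k A A' g hinj hrad
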